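/- In the database D constructed from an undirected graph G = (V, E) with V ⊆ ℕ by adding, for every edge {a,b} ∈ E with a < b, the facts R₁(a,b), R₂(a,b), S₂(a,b), R₁(a,a), S₁(a,a): (1) D satisfies the role inclusions S₁ ⊆ R₁ and S₂ ⊆ R₂; and (2) the answers to q(x₁,x₂,x₃,x₄) ← R₁(x₁,x₂), R₂(x₁,x₃), S₁(x₄,x₂), S₂(x₄,x₃) on D are exactly the tuples (a,b,c,b) with a < b < c and {a,b}, {b,c}, {a,c} ∈ E, together with the tuples (a,a,b,a) with a < b and {a,b} ∈ E. -/
import Mathlib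


/-- A relational instance over schema `σ` with domain `α`: a set of facts. -/
abbrev Inst (σ α : Type) := Set (σ × List α)

/-- `h` is a homomorphism from instance `D` to instance `E`. -/
def IsHom {σ α β : Type} (D : Inst σ α) (E : Inst σ β) (h : α → β) : Prop :=
  ∀ R as, (R, as) ∈ D → (R, as.map h) ∈ E

/-- The active domain of an instance. -/
def activeDom {σ α : Type} (D : Inst σ α) : Set α :=
  {a | ∃ R as, (R, as) ∈ D ∧ a ∈ as}

/-- Variables occurring in a set of atoms (atoms use natural numbers as variables). -/
def varsOf {σ : Type} (S : Set (σ × List ℕ)) : Set ℕ :=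
  {x | ∃ R as, (R, as) ∈ S ∧ x ∈ as}

/-- A tuple-generating dependency: body and head are sets of relational atoms. -/
structure TGD (σ : Type) where
  body : Set (σ × List ℕ)
  head : Set (σ × List ℕ)

/-- Frontier variables: variables shared by body and head. -/
def TGD.frontier {σ : Type} (t : TGD σ) : Set ℕ := varsOf t.body ∩ varsOf t.head

/-- `D` satisfies the TGD `t`. -/
def Satisfies {σ α : Type} (D : Inst σ α) (t : TGD σ) : Prop :=
  ∀ h : ℕ → α, IsHom t.body D h →
    ∃ g : ℕ → α, (∀ x ∈ t.frontier, g x = h x) ∧ IsHom t.head D g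

/-- A conjunctive query: a set of atoms and a list of answer variables. -/
structure CQ (σ : Type) where
  atoms : Set (σ × List ℕ)
  ansVars : List ℕ

/-- The set of answers to a CQ on an instance. -/
def CQ.Ans {σ α : Type} (q : CQ σ) (D : Inst σ α) : Set (List α) :=
  {c | ∃ h : ℕ → α, IsHom q.atoms D h ∧ q.ansVars.map h = c}

/-- The schema of the example: four binary relation symbols. -/
inductive S4 : Type where
  | R1 | R2 | S1 | S2
deriving DecidableEq

/-- The database constructed from an undirected graph with edge relation `E`:
for every edge `{a,b}` with `a < b`, the facts
`R₁(a,b), R₂(a,b), S₂(a,b), R₁(a,a), S₁(a,a)`. -/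
def Dgraph (E : ℕ → ℕ → Prop) : Inst S4 ℕ :=
  {f | ∃ a b, E a b ∧ a < b ∧
    (f = (S4.R1, [a, b]) ∨ f = (S4.R2, [a, b]) ∨ f = (S4.S2, [a, b]) ∨
     f = (S4.R1, [a, a]) ∨ f = (S4.S1, [a, a]))}

/-- The CQ q(x₁,x₂,x₃,x₄) ← R₁(x₁,x₂), R₂(x₁,x₃), S₁(x₄,x₂), S₂(x₄,x₃). -/
def qtri : CQ S4 where
  atoms := {(S4.R1, [1, 2]), (S4.R2, [1, 3]), (S4.S1, [4, 2]), (S4.S2, [4, 3])}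
  ansVars := [1, 2, 3, 4]

lemma memS1 {E : ℕ → ℕ → Prop} {as : List ℕ} :
    (S4.S1, as) ∈ Dgraph E ↔ ∃ a b, E a b ∧ a < b ∧ as = [a, a] := by
  simp [Dgraph, Prod.ext_iff]

lemma memS2 {E : ℕ → ℕ → Prop} {as : List ℕ} :
    (S4.S2, as) ∈ Dgraph E ↔ ∃ a b, E a b ∧ a < b ∧ as = [a, b] := by
  simp [Dgraph, Prod.ext_iff]

lemma memR2 {E : ℕ → ℕ → Prop} {as : List ℕ} :
    (S4.R2, as) ∈ Dgraph E ↔ ∃ a b, E a b ∧ a < b ∧ as = [a, b] := by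
  simp [Dgraph, Prod.ext_iff]

lemma memR1 {E : ℕ → ℕ → Prop} {as : List ℕ} :
    (S4.R1, as) ∈ Dgraph E ↔ ∃ a b, E a b ∧ a < b ∧ (as = [a, b] ∨ as = [a, a]) := by
  simp [Dgraph, Prod.ext_iff]

/-- (1) `Dgraph E` satisfies the role inclusions `S₁ ⊆ R₁` and `S₂ ⊆ R₂`;
(2) the answers to `qtri` on `Dgraph E` are exactly the tuples `(a,b,c,b)`
with `a < b < c` forming a triangle, together with the tuples `(a,a,b,a)` with
`a < b` an edge. -/
theorem stmt19 (E : ℕ → ℕ → Prop)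
    (hsym : ∀ a b, E a b → E b a) (hirr : ∀ a, ¬ E a a) :
    (Satisfies (Dgraph E) (⟨{(S4.S1, [1, 2])}, {(S4.R1, [1, 2])}⟩ : TGD S4) ∧
     Satisfies (Dgraph E) (⟨{(S4.S2, [1, 2])}, {(S4.R2, [1, 2])}⟩ : TGD S4)) ∧
    qtri.Ans (Dgraph E) =
      {l | ∃ a b c, a < b ∧ b < c ∧ E a b ∧ E b c ∧ E a c ∧ l = [a, b, c, b]} ∪
      {l | ∃ a b, a < b ∧ E a b ∧ l = [a, a, b, a]} := by
  refine ⟨⟨?_, ?_⟩, ?_⟩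
  · intro h hh
    have h1 := hh S4.S1 [1, 2] rfl
    simp only [List.map] at h1
    rw [memS1] at h1
    obtain ⟨a, b, hab, hlt, heq⟩ := h1
    obtain ⟨e1, e2⟩ : h 1 = a ∧ h 2 = a := by simpa using heq
    refine ⟨h, fun x _ => rfl, ?_⟩
    intro R as hmem
    obtain ⟨rfl, rfl⟩ := Prod.ext_iff.mp (Set.mem_singleton_iff.mp hmem)
    simp only [List.map]
    rw [memR1]
    exact ⟨a, b, hab, hlt, Or.inr (by rw [e1, e2])⟩
  · intro h hh
    have h1 := hh S4.S2 [1, 2] rfl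
    simp only [List.map] at h1
    rw [memS2] at h1
    obtain ⟨a, b, hab, hlt, heq⟩ := h1
    refine ⟨h, fun x _ => rfl, ?_⟩
    intro R as hmem
    obtain ⟨rfl, rfl⟩ := Prod.ext_iff.mp (Set.mem_singleton_iff.mp hmem)
    simp only [List.map]
    rw [memR2]
    exact ⟨a, b, hab, hlt, heq⟩
  · ext l
    constructor
    · rintro ⟨h, hh, rfl⟩
      have hR1 := hh S4.R1 [1, 2] (by left; rfl)
      have hR2 := hh S4.R2 [1, 3] (by right; left; rfl)
      have hS1 := hh S4.S1 [4, 2] (by right; right; left; rfl)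
      have hS2 := hh S4.S2 [4, 3] (by right; right; right; rfl)
      simp only [List.map] at hR1 hR2 hS1 hS2
      rw [memR1] at hR1; rw [memR2] at hR2; rw [memS1] at hS1; rw [memS2] at hS2
      obtain ⟨a1, b1, e1, l1, hc1⟩ := hR1
      obtain ⟨a2, b2, e2, l2, hq2⟩ := hR2
      obtain ⟨a3, b3, e3, l3, hq3⟩ := hS1
      obtain ⟨a4, b4, e4, l4, hq4⟩ := hS2
      obtain ⟨f1, f2⟩ : h 1 = a2 ∧ h 3 = b2 := by simpa using hq2
      obtain ⟨f3, f4⟩ : h 4 = a3 ∧ h 2 = a3 := by simpa using hq3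
      obtain ⟨f5, f6⟩ : h 4 = a4 ∧ h 3 = b4 := by simpa using hq4
      have e42 : h 4 = h 2 := f3.trans f4.symm
      rcases hc1 with hq1 | hq1
      · obtain ⟨g1, g2⟩ : h 1 = a1 ∧ h 2 = b1 := by simpa using hq1
        left
        refine ⟨h 1, h 2, h 3, ?_, ?_, ?_, ?_, ?_, ?_⟩
        · rw [g1, g2]; exact l1
        · rw [← e42, f5, f6]; exact l4
        · rw [g1, g2]; exact e1
        · rw [← e42, f5, f6]; exact e4
        · rw [f1, f2]; exact e2
        · simp [qtri, e42]
      · obtain ⟨g1, g2⟩ : h 1 = a1 ∧ h 2 = a1 := by simpa using hq1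
        have e21 : h 2 = h 1 := g2.trans g1.symm
        right
        refine ⟨h 1, h 3, ?_, ?_, ?_⟩
        · rw [f1, f2]; exact l2
        · rw [f1, f2]; exact e2
        · simp [qtri, e21, e42.trans e21]
    · rintro (⟨a, b, c, hab, hbc, eab, ebc, eac, rfl⟩ | ⟨a, b, hab, eab, rfl⟩)
      · refine ⟨fun x => if x = 1 then a else if x = 2 then b else if x = 3 then c else b,
          ?_, by simp [qtri]⟩
        intro R as hmem
        rcases hmem with h' | h' | h' | h' <;>
          obtain ⟨rfl, rfl⟩ := Prod.ext_iff.mp h' <;> simp only [List.map]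
        · rw [memR1]; exact ⟨a, b, eab, hab, by norm_num⟩
        · rw [memR2]; exact ⟨a, c, eac, hab.trans hbc, by norm_num⟩
        · rw [memS1]; exact ⟨b, c, ebc, hbc, by norm_num⟩
        · rw [memS2]; exact ⟨b, c, ebc, hbc, by norm_num⟩
      · refine ⟨fun x => if x = 3 then b else a, ?_, by simp [qtri]⟩
        intro R as hmem
        rcases hmem with h' | h' | h' | h' <;>
          obtain ⟨rfl, rfl⟩ := Prod.ext_iff.mp h' <;> simp only [List.map]
        · rw [memR1]; exact ⟨a, b, eab, hab, by norm_num⟩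
        · rw [memR2]; exact ⟨a, b, eab, hab, by norm_num⟩
        · rw [memS1]; exact ⟨a, b, eab, hab, by norm_num⟩
        · rw [memS2]; exact ⟨a, b, eab, hab, by norm_num⟩
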